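/- Let z be an infinite binary sequence computable from y (via a total computable functional), let n₁(n) = Σ_{i=1}^n y_i with lim_n n₁(n)/n > 0, and suppose each prefix z_1^{l_n} is computable from y_1^n with lim_n l_n/n > 0. Then limsup_n K(z_1^n/y_1^n | y_1^n)/n₁(n) < 1. -/

import Mathlib

open Filter

/-- The first `n` bits `y_1^n` of an infinite sequence `y`. -/
def pref (y : ℕ → Bool) (n : ℕ) : List Bool := List.ofFn (fun i : Fin n => y i)

/-- Subsequence of the string `x` at the positions where `y` is `true`. -/
def selT (x y : List Bool) : List Bool :=
  ((x.zip y).filter (fun p => p.2)).map Prod.fst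

/-- Subsequence of the string `x` at the positions where `y` is `false`. -/
def selF (x y : List Bool) : List Bool :=
  ((x.zip y).filter (fun p => !p.2)).map Prod.fst

/-- `z` is computable from `y` via a total computable monotone functional with
unbounded output. -/
def ComputableFrom (z y : ℕ → Bool) : Prop :=
  ∃ g : List Bool → List Bool, Computable g ∧
    (∀ n, g (pref y n) <+: g (pref y (n + 1))) ∧
    (∀ m, ∃ n, m ≤ (g (pref y n)).length) ∧
    (∀ n, g (pref y n) = pref z (g (pref y n)).length)

/-!
Let `g` compute `z_1^{l_n}` from `y_1^n`. Then `w ↦ (g w)/w` is computable and, at `w = y_1^n`,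
returns the selected bits of `z` at the positions `≤ min (l_n, n)`: a prefix of `z_1^n/y_1^n`
of length `n₁(min (l_n, n))`. Hence
`K(z_1^n/y_1^n | y_1^n) ≤ n₁(n) - n₁(min (l_n, n)) + O(log n₁(n))`, and dividing by `n₁(n)`, the
density of `y` gives `n₁(min (l_n, n)) / n₁(n) → min (c, 1)`, so the limsup is at most
`1 - min (c, 1) < 1`.
-/

open Topology Asymptotics

@[simp]
theorem length_pref (y : ℕ → Bool) (n : ℕ) : (pref y n).length = n := by
  simp [pref]

theorem pref_prefix_pref (y : ℕ → Bool) {m n : ℕ} (h : m ≤ n) : pref y m <+: pref y n :=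
  List.prefix_iff_eq_take.mpr <| List.ext_getElem (by simp [h]) fun i _ _ => by simp [pref]

theorem zip_pref_pref (z y : ℕ → Bool) (a b : ℕ) :
    (pref z a).zip (pref y b) = (pref z (min a b)).zip (pref y (min a b)) :=
  List.ext_getElem (by simp) fun i _ _ => by simp [pref]

theorem selT_prefix_selT {x x' y y' : List Bool} (hx : x <+: x') (hy : y <+: y')
    (h : x.length = y.length) : selT x y <+: selT x' y' := by
  obtain ⟨r, rfl⟩ := hx
  obtain ⟨s, rfl⟩ := hy
  exact ((List.zip_append h ▸ List.prefix_append (x.zip y) (r.zip s)).filter _).map _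

theorem length_selT : ∀ x y : List Bool, x.length = y.length → (selT x y).length = y.count true
  | [], [], _ => rfl
  | _ :: x, b :: y, h => by
    have ih := length_selT x y (Nat.succ_injective h)
    cases b <;> simp_all [selT]

theorem selT_pref_eq_selT_pref_min (z y : ℕ → Bool) (a b : ℕ) :
    selT (pref z a) (pref y b) = selT (pref z (min a b)) (pref y (min a b)) := by
  rw [selT, zip_pref_pref, selT]

theorem selT_pref_prefix_selT_pref (z y : ℕ → Bool) (a n : ℕ) :
    selT (pref z a) (pref y n) <+: selT (pref z n) (pref y n) := by
  rw [selT_pref_eq_selT_pref_min]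
  exact selT_prefix_selT (pref_prefix_pref z (min_le_right a n))
    (pref_prefix_pref y (min_le_right a n)) (by simp)

theorem length_selT_pref (z y : ℕ → Bool) (a n : ℕ) :
    (selT (pref z a) (pref y n)).length = (pref y (min a n)).count true := by
  rw [selT_pref_eq_selT_pref_min, length_selT _ _ (by simp)]

theorem List.zip_eq_map_range_getD {α β : Type*} [Inhabited α] [Inhabited β]
    (x : List α) (y : List β) :
    x.zip y = (List.range (min x.length y.length)).map
      fun i => (x.getD i default, y.getD i default) := by
  apply List.ext_getElem <;> simp +contextual

theorem Primrec.list_zip {α β : Type*} [Primcodable α] [Primcodable β] [Inhabited α]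
    [Inhabited β] :
    Primrec₂ (List.zip : List α → List β → List (α × β)) := by
  refine .of_eq ?_ fun x y => (List.zip_eq_map_range_getD x y).symm
  refine Primrec.list_map (Primrec.list_range.comp (Primrec.nat_min.comp
    (Primrec.list_length.comp .fst) (Primrec.list_length.comp .snd))) ?_
  exact Primrec₂.pair.comp₂ ((Primrec.list_getD _).comp₂ (Primrec.fst.comp₂ .left) .right)
    ((Primrec.list_getD _).comp₂ (Primrec.snd.comp₂ .left) .right)

theorem primrec₂_selT : Primrec₂ selT := by
  have hfilter : Primrec fun l : List (Bool × Bool) => l.filter (·.2) :=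
    (Primrec.listFilter (p := fun q : Bool × Bool => q.2 = true)
      (PrimrecPred.of_eq (Primrec.eq.comp .snd (.const true)) fun _ => Iff.rfl)).of_eq
      fun _ => by simp
  exact Primrec.list_map (hfilter.comp Primrec.list_zip) (Primrec.fst.comp₂ .right)

theorem tendsto_atTop_of_tendsto_div_natCast {u : ℕ → ℕ} {c : ℝ} (hc : 0 < c)
    (hu : Tendsto (fun n => (u n : ℝ) / n) atTop (𝓝 c)) : Tendsto u atTop atTop := by
  rw [← tendsto_natCast_atTop_iff (R := ℝ)]
  refine (hu.pos_mul_atTop hc tendsto_natCast_atTop_atTop).congr' ?_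
  filter_upwards [eventually_ne_atTop 0] with n hn
  field_simp

theorem tendsto_min_self_div_natCast {u : ℕ → ℕ} {c : ℝ}
    (hu : Tendsto (fun n => (u n : ℝ) / n) atTop (𝓝 c)) :
    Tendsto (fun n => (min (u n) n : ℕ) / (n : ℝ)) atTop (𝓝 (min c 1)) := by
  refine (hu.min tendsto_const_nhds).congr' ?_
  filter_upwards [eventually_gt_atTop 0] with n hn
  rw [Nat.cast_min, ← min_div_div_right (Nat.cast_nonneg n), div_self (by positivity)]

theorem tendsto_comp_div_of_tendsto_div_natCast {f : ℕ → ℝ} {d r : ℝ} (hd : d ≠ 0)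
    (hf : Tendsto (fun n => f n / n) atTop (𝓝 d)) {m : ℕ → ℕ} (hm : Tendsto m atTop atTop)
    (hmr : Tendsto (fun n => (m n : ℝ) / n) atTop (𝓝 r)) :
    Tendsto (fun n => f (m n) / f n) atTop (𝓝 r) := by
  have hlim := ((hf.comp hm).mul hmr).div hf hd
  rw [mul_div_cancel_left₀ r hd] at hlim
  refine hlim.congr' ?_
  filter_upwards [hm.eventually_ne_atTop 0, eventually_ne_atTop 0] with n hmn hn
  simp only [Function.comp_apply, Pi.div_apply]
  rw [div_mul_div_cancel₀ (Nat.cast_ne_zero.mpr hmn),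
    div_div_div_cancel_right₀ (Nat.cast_ne_zero.mpr hn)]

theorem tendsto_logb_add_two_div_atTop (C : ℝ) :
    Tendsto (fun x : ℝ => (C * Real.logb 2 (x + 2) + C) / x) atTop (𝓝 0) := by
  have hshift : (fun x : ℝ => x + 2) =O[atTop] id :=
    (isBigO_refl _ _).add (isLittleO_const_id_atTop 2).isBigO
  have hlog : (fun x : ℝ => Real.log (x + 2)) =o[atTop] id :=
    (Real.isLittleO_log_id_atTop.comp_tendsto
      (tendsto_atTop_add_const_right _ 2 tendsto_id)).trans_isBigO hshift
  refine IsLittleO.tendsto_div_nhds_zero ?_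
  refine ((hlog.const_mul_left (C / Real.log 2)).add (isLittleO_const_id_atTop C)).congr_left
    fun x => ?_
  rw [Real.logb, mul_div_assoc', div_mul_eq_mul_div]

theorem limsup_le_of_eventually_le_of_tendsto {ι : Type*} {l : Filter ι} [l.NeBot] {f a : ι → ℝ}
    {L : ℝ} (hf : IsBoundedUnder (· ≥ ·) l f) (hfa : f ≤ᶠ[l] a) (ha : Tendsto a l (𝓝 L)) :
    limsup f l ≤ L :=
  ha.limsup_eq ▸ limsup_le_limsup hfa hf.isCoboundedUnder_le ha.isBoundedUnder_le

theorem complexity_selT_pref_le {CK : List Bool → List Bool → ℕ} {g : List Bool → List Bool}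
    {C : ℕ} (hC : ∀ w v : List Bool, selT (g w) w <+: v →
      (CK v w : ℝ) ≤ ((v.length - (selT (g w) w).length : ℕ) : ℝ)
        + C * Real.logb 2 (v.length + 2) + C)
    {y z : ℕ → Bool} {l : ℕ → ℕ} (hgz : ∀ n, g (pref y n) = pref z (l n)) (n : ℕ) :
    (CK (selT (pref z n) (pref y n)) (pref y n) : ℝ) ≤
      (pref y n).count true - (pref y (min (l n) n)).count true
        + (C * Real.logb 2 ((pref y n).count true + 2) + C) := by
  have hpre := selT_pref_prefix_selT_pref z y (l n) n
  have hle := hpre.length_le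
  have hCn := hC (pref y n) _ (by simpa only [hgz] using hpre)
  simp only [hgz, length_selT_pref, min_self] at hCn hle
  rwa [Nat.cast_sub hle, add_assoc] at hCn

theorem selected_part_of_computable_has_small_rate_general
    (CK : List Bool → List Bool → ℕ)
    (hfree : ∀ g : List Bool → List Bool, Computable g → ∃ c : ℕ,
      ∀ w v : List Bool, g w <+: v →
        (CK v w : ℝ) ≤ ((v.length - (g w).length : ℕ) : ℝ)
          + c * Real.logb 2 (v.length + 2) + c)
    (y z : ℕ → Bool)
    (d : ℝ) (hd : 0 < d)
    (hdens : Tendsto (fun n => ((pref y n).count true : ℝ) / n) atTop (nhds d))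
    (l : ℕ → ℕ) (c : ℝ) (hc : 0 < c)
    (hl : Tendsto (fun n => (l n : ℝ) / n) atTop (nhds c))
    (hcomp : ∃ g : List Bool → List Bool, Computable g ∧
      ∀ n, g (pref y n) = pref z (l n)) :
    Filter.limsup
      (fun n => (CK (selT (pref z n) (pref y n)) (pref y n) : ℝ)
        / ((pref y n).count true : ℝ)) atTop < 1 := by
  obtain ⟨g, hg, hgz⟩ := hcomp
  obtain ⟨C, hC⟩ := hfree (fun w => selT (g w) w) (primrec₂_selT.to_comp.comp hg .id)
  have hbound := complexity_selT_pref_le hC hgz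
  have hN : Tendsto (fun n => (pref y n).count true) atTop atTop :=
    tendsto_atTop_of_tendsto_div_natCast hd hdens
  have hmin := tendsto_min_self_div_natCast hl
  have hratio := tendsto_comp_div_of_tendsto_div_natCast hd.ne' hdens
    (tendsto_atTop_of_tendsto_div_natCast (lt_min hc one_pos) hmin) hmin
  have hlog := (tendsto_logb_add_two_div_atTop C).comp (tendsto_natCast_atTop_atTop.comp hN)
  refine (limsup_le_of_eventually_le_of_tendsto (isBoundedUnder_of_eventually_ge
    (.of_forall fun n => by positivity)) ?_
    (((tendsto_const_nhds (x := (1 : ℝ))).sub hratio).add hlog)).trans_lt ?_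
  · filter_upwards [hN.eventually_gt_atTop 0] with n hn
    have hn' : (0 : ℝ) < (pref y n).count true := by exact_mod_cast hn
    refine (div_le_div_of_nonneg_right (hbound n) hn'.le).trans_eq ?_
    simp only [Function.comp_apply]
    field_simp
  · linarith [lt_min hc one_pos]

/-- Proposition 2, core of (ii) ⇒ (i): if `z` is computable from `y` and each prefix
`z_1^{l_n}` is computable from `y_1^n` with `l_n` of linear growth, then the
selected sequence `z/y` has conditional complexity rate strictly below `1`.  The
key property of conditional prefix complexity `CK` — that a part of a string
computable from the condition is for free, up to `O(log)` — is a hypothesis. -/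
theorem selected_part_of_computable_has_small_rate
    (CK : List Bool → List Bool → ℕ)
    (hfree : ∀ g : List Bool → List Bool, Computable g → ∃ c : ℕ,
      ∀ w v : List Bool, g w <+: v →
        (CK v w : ℝ) ≤ ((v.length - (g w).length : ℕ) : ℝ)
          + c * Real.logb 2 (v.length + 2) + c)
    (y z : ℕ → Bool) (hzy : ComputableFrom z y)
    (d : ℝ) (hd : 0 < d)
    (hdens : Tendsto (fun n => ((pref y n).count true : ℝ) / n) atTop (nhds d))
    (l : ℕ → ℕ) (c : ℝ) (hc : 0 < c)
    (hl : Tendsto (fun n => (l n : ℝ) / n) atTop (nhds c))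
    (hcomp : ∃ g : List Bool → List Bool, Computable g ∧
      ∀ n, g (pref y n) = pref z (l n)) :
    Filter.limsup
      (fun n => (CK (selT (pref z n) (pref y n)) (pref y n) : ℝ)
        / ((pref y n).count true : ℝ)) atTop < 1 :=
  selected_part_of_computable_has_small_rate_general CK hfree y z d hd hdens l c hc hl hcomp
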